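/- arXiv:2602.01488 — 3 statements merged into one kernel-verified Lean document; each statement's English description precedes it below -/
import Mathlib

section
/- For each integer ℓ ≥ 2, the smallest element of V̄_ℓ is F_ℓ. Moreover, for each integer i ≥ ℓ, the map x ↦ x − 2F_{i−2} restricts to an order preserving bijection from V̄_ℓ ∩ (F_i, F_{i+1}) onto V̄_ℓ ∩ (F_{i−3}, F_{i−1}+F_{i−3}). -/
noncomputable section

/-- `F i` is the Fibonacci number `F_i` of the paper (`F_0 = 1`, `F_1 = 1`, `F_2 = 2`, ...). -/
def F (i : ℕ) : ℕ := Nat.fib (i + 1)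

/-- `x` belongs to the set `F̄ = {0,1,2,3,5,8,...}` of all Fibonacci numbers (including `0`). -/
def IsFib (x : ℕ) : Prop := ∃ i : ℕ, Nat.fib i = x

open scoped Classical in
/-- The map `ῑ : ℕ → ℕ`: `ῑ(x) = x` if `x ∈ F̄`, and `ῑ(x) = x - 2 F_{i-2}`
if `F_i < x < F_{i+1}` for the (unique) integer `i ≥ 3`. -/
noncomputable def iotaBar (x : ℕ) : ℕ :=
  if IsFib x then x
  else x - 2 * F (sInf {i : ℕ | x < F (i + 1)} - 2)

/-- `ᾱ(x)` is the eventual constant value of the iterates of `ῑ` at `x`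
(the iterates stabilize after at most `x` steps). -/
noncomputable def alphaBar (x : ℕ) : ℕ := iotaBar^[x] x

/-- `V̄_ℓ = {x ∈ ℕ : ᾱ(x) ≥ F_ℓ}`. -/
def VBar (ℓ : ℕ) : Set ℕ := {x : ℕ | F ℓ ≤ alphaBar x}

/-- `x < y` are consecutive elements of `S`. -/
def ConsecIn (S : Set ℕ) (x y : ℕ) : Prop :=
  x ∈ S ∧ y ∈ S ∧ x < y ∧ ∀ z ∈ S, ¬(x < z ∧ z < y)

lemma F_pos (n : ℕ) : 0 < F n := Nat.fib_pos.mpr (Nat.succ_pos n)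

lemma F_mono : Monotone F := fun a b h => Nat.fib_mono (by omega)

lemma iotaBar_fib {x : ℕ} (h : IsFib x) : iotaBar x = x := by
  rw [iotaBar, if_pos h]

lemma iotaBar_lt {x : ℕ} (h : ¬ IsFib x) : iotaBar x < x := by
  have hx : 0 < x := by
    rcases Nat.eq_zero_or_pos x with h0 | h0
    · exact absurd ⟨0, by simp [h0]⟩ h
    · exact h0
  rw [iotaBar, if_neg h]
  have := F_pos (sInf {i : ℕ | x < F (i + 1)} - 2)
  exact Nat.sub_lt hx (by omega)

lemma iotaBar_le (x : ℕ) : iotaBar x ≤ x := by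
  by_cases h : IsFib x
  · rw [iotaBar_fib h]
  · exact (iotaBar_lt h).le

lemma iterate_fixed {x : ℕ} (h : IsFib x) (m : ℕ) : iotaBar^[m] x = x := by
  induction m with
  | zero => rfl
  | succ m ih => rw [Function.iterate_succ_apply', ih, iotaBar_fib h]

lemma iter_stab : ∀ x n, x ≤ n → iotaBar^[n] x = alphaBar x := by
  intro x
  induction x using Nat.strong_induction_on with
  | _ x ih =>
    intro n hn
    by_cases hf : IsFib x
    · rw [iterate_fixed hf, alphaBar, iterate_fixed hf]
    · have hlt := iotaBar_lt hf
      obtain ⟨m, rfl⟩ : ∃ m, n = m + 1 := ⟨n - 1, by omega⟩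
      rw [Function.iterate_succ_apply, ih _ hlt m (by omega)]
      obtain ⟨k, hk⟩ : ∃ k, x = k + 1 := ⟨x - 1, by omega⟩
      conv_rhs => rw [alphaBar, hk, Function.iterate_succ_apply]
      rw [← hk, ih _ hlt k (by omega)]

lemma alphaBar_iotaBar (x : ℕ) : alphaBar (iotaBar x) = alphaBar x := by
  by_cases hf : IsFib x
  · rw [iotaBar_fib hf]
  · have hlt := iotaBar_lt hf
    obtain ⟨k, hk⟩ : ∃ k, x = k + 1 := ⟨x - 1, by omega⟩
    conv_rhs => rw [alphaBar, hk, Function.iterate_succ_apply]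
    rw [← hk, iter_stab _ k (by omega)]

lemma alphaBar_le (x : ℕ) : alphaBar x ≤ x := by
  have : ∀ m y, iotaBar^[m] y ≤ y := by
    intro m
    induction m with
    | zero => intro y; exact le_refl y
    | succ m ih =>
      intro y
      rw [Function.iterate_succ_apply]
      exact (ih _).trans (iotaBar_le y)
  exact this x x

lemma not_fib_of_mem {i x : ℕ} (h1 : F i < x) (h2 : x < F (i + 1)) : ¬ IsFib x := by
  rintro ⟨j, rfl⟩
  have ha : j < i + 2 := by
    by_contra h
    have h' : Nat.fib (i + 2) ≤ Nat.fib j := Nat.fib_mono (by omega)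
    have : F (i + 1) ≤ Nat.fib j := h'
    omega
  have hb : i + 1 < j := by
    by_contra h
    have h' : Nat.fib j ≤ Nat.fib (i + 1) := Nat.fib_mono (by omega)
    have : Nat.fib j ≤ F i := h'
    omega
  omega

lemma sInf_eq_of_mem {i x : ℕ} (h1 : F i < x) (h2 : x < F (i + 1)) :
    sInf {j : ℕ | x < F (j + 1)} = i := by
  have hmem : i ∈ {j : ℕ | x < F (j + 1)} := h2
  refine le_antisymm (Nat.sInf_le hmem) ?_
  by_contra hc
  push_neg at hc
  have hm := Nat.sInf_mem (⟨i, hmem⟩ : Set.Nonempty {j : ℕ | x < F (j + 1)})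
  simp only [Set.mem_setOf_eq] at hm
  have : F (sInf {j : ℕ | x < F (j + 1)} + 1) ≤ F i := F_mono (by omega)
  omega

lemma iotaBar_spec {i x : ℕ} (h1 : F i < x) (h2 : x < F (i + 1)) :
    iotaBar x = x - 2 * F (i - 2) := by
  rw [iotaBar, if_neg (not_fib_of_mem h1 h2), sInf_eq_of_mem h1 h2]

lemma mem_VBar_iff {ℓ i x : ℕ} (h1 : F i < x) (h2 : x < F (i + 1)) :
    x ∈ VBar ℓ ↔ x - 2 * F (i - 2) ∈ VBar ℓ := by
  have h : alphaBar (x - 2 * F (i - 2)) = alphaBar x := by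
    rw [← iotaBar_spec h1 h2, alphaBar_iotaBar]
  simp only [VBar, Set.mem_setOf_eq, h]

lemma mem_VBar_iff' {ℓ k x : ℕ} (h1 : F (k + 3) < x) (h2 : x < F (k + 4)) :
    x ∈ VBar ℓ ↔ x - 2 * F (k + 1) ∈ VBar ℓ :=
  mem_VBar_iff (i := k + 3) h1 h2

theorem VBar_least_and_iota_bijection (ℓ : ℕ) (hℓ : 2 ≤ ℓ) :
    IsLeast (VBar ℓ) (F ℓ) ∧
    ∀ i : ℕ, ℓ ≤ i →
      Set.BijOn (fun x => x - 2 * F (i - 2))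
        (VBar ℓ ∩ Set.Ioo (F i) (F (i + 1)))
        (VBar ℓ ∩ Set.Ioo (F (i - 3)) (F (i - 1) + F (i - 3))) ∧
      StrictMonoOn (fun x => x - 2 * F (i - 2))
        (VBar ℓ ∩ Set.Ioo (F i) (F (i + 1))) := by
  constructor
  · constructor
    · show F ℓ ≤ alphaBar (F ℓ)
      rw [alphaBar, iterate_fixed (x := F ℓ) ⟨ℓ + 1, rfl⟩]
    · intro x hx
      exact le_trans hx (alphaBar_le x)
  · intro i hi
    rcases Nat.lt_or_ge i 3 with h3 | h3
    · -- i = 2, both sets empty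
      have hi2 : i = 2 := by omega
      subst hi2
      have e2 : F 2 = 2 := by decide
      have e3 : F (2 + 1) = 3 := by decide
      have hs : VBar ℓ ∩ Set.Ioo (F 2) (F (2 + 1)) = ∅ := by
        ext x
        simp only [Set.mem_inter_iff, Set.mem_Ioo, Set.mem_empty_iff_false, iff_false, not_and]
        intro _ h
        omega
      constructor
      · rw [hs]
        have ht : VBar ℓ ∩ Set.Ioo (F (2 - 3)) (F (2 - 1) + F (2 - 3)) = ∅ := by
          have ea : F (2 - 3) = 1 := by decide
          have eb : F (2 - 1) = 1 := by decide
          ext x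
          simp only [Set.mem_inter_iff, Set.mem_Ioo, Set.mem_empty_iff_false, iff_false, not_and]
          intro _ h
          omega
        rw [ht]
        exact Set.bijOn_empty _
      · intro x hx
        rw [hs] at hx
        exact absurd hx (Set.notMem_empty x)
    · obtain ⟨k, rfl⟩ : ∃ k, i = k + 3 := ⟨i - 3, by omega⟩
      simp only [show k + 3 - 2 = k + 1 from rfl, show k + 3 - 3 = k from rfl,
        show k + 3 - 1 = k + 2 from rfl, show k + 3 + 1 = k + 4 from rfl]
      have ha := F_pos k
      have hb := F_pos (k + 1)
      have hab : F k ≤ F (k + 1) := F_mono (Nat.le_succ k)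
      have e1 : F (k + 2) = F k + F (k + 1) := Nat.fib_add_two
      have e2 : F (k + 3) = F (k + 1) + F (k + 2) := Nat.fib_add_two
      have e3 : F (k + 4) = F (k + 2) + F (k + 3) := Nat.fib_add_two
      refine ⟨⟨?_, ?_, ?_⟩, ?_⟩
      · -- MapsTo
        rintro x ⟨hv, hlo, hhi⟩
        refine ⟨(mem_VBar_iff' hlo hhi).mp hv, ?_, ?_⟩ <;> · simp only; omega
      · -- InjOn
        rintro x ⟨_, hx, _⟩ y ⟨_, hy, _⟩ hxy
        simp only at hxy
        omega
      · -- SurjOn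
        rintro y ⟨hv, hlo, hhi⟩
        refine ⟨y + 2 * F (k + 1), ⟨?_, by omega, by omega⟩, by simp⟩
        refine (mem_VBar_iff' (ℓ := ℓ) (k := k) (x := y + 2 * F (k + 1)) (by omega) (by omega)).mpr ?_
        simpa using hv
      · -- StrictMonoOn
        rintro x ⟨_, hx, _⟩ y ⟨_, hy, _⟩ hxy
        simp only
        omega
end
end

section
/- Let k ≥ 3 be an integer. For each x ∈ ℕ with 0 ≤ x ≤ F_{k−1}+F_{k−3}, we have ᾱ(x) ≤ ᾱ(x + 2F_{k−2}), with equality if x is not a Fibonacci number and x ≠ F_{k−1}+F_{k−3}. -/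
noncomputable section

lemma F_add_two (n : ℕ) : F (n + 2) = F (n + 1) + F n := by
  have h : Nat.fib (n + 3) = Nat.fib (n + 1) + Nat.fib (n + 2) := Nat.fib_add_two (n := n + 1)
  show Nat.fib (n + 3) = Nat.fib (n + 2) + Nat.fib (n + 1)
  omega

lemma F_lt_F_succ {n : ℕ} (h : 1 ≤ n) : F n < F (n + 1) :=
  Nat.fib_lt_fib_succ (by omega)

lemma isFib_F (n : ℕ) : IsFib (F n) := ⟨n + 1, rfl⟩

lemma not_isFib_of_between {k y : ℕ} (h1 : F k < y) (h2 : y < F (k + 1)) :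
    ¬ IsFib y := by
  rintro ⟨j, rfl⟩
  rcases le_or_gt j (k + 1) with h | h
  · exact absurd (Nat.fib_mono h) (by simpa [F] using h1.not_ge)
  · have : F (k + 1) ≤ Nat.fib j := Nat.fib_mono (by omega)
    omega

lemma sInf_set_eq {k y : ℕ} (h1 : F k < y) (h2 : y < F (k + 1)) :
    sInf {i : ℕ | y < F (i + 1)} = k := by
  have hmem : k ∈ {i : ℕ | y < F (i + 1)} := h2
  refine le_antisymm (Nat.sInf_le hmem) ?_
  by_contra h
  push_neg at h
  have h' := Nat.sInf_mem (⟨k, hmem⟩ : Set.Nonempty {i : ℕ | y < F (i + 1)})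
  have : F (sInf {i : ℕ | y < F (i + 1)} + 1) ≤ F k := F_mono (by omega)
  have := h'
  simp only [Set.mem_setOf_eq] at this
  omega

lemma iotaBar_between {k y : ℕ} (hk : 3 ≤ k) (h1 : F k < y) (h2 : y < F (k + 1)) :
    iotaBar y = y - 2 * F (k - 2) := by
  rw [iotaBar, if_neg (not_isFib_of_between h1 h2), sInf_set_eq h1 h2]

lemma isFib_of_le_three {x : ℕ} (h : x ≤ 3) : IsFib x := by
  interval_cases x
  · exact ⟨0, rfl⟩
  · exact ⟨1, rfl⟩
  · exact ⟨3, rfl⟩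
  · exact ⟨4, rfl⟩

lemma fib_exists_between {x : ℕ} (h : ¬ IsFib x) : ∃ k, 3 ≤ k ∧ F k < x ∧ x < F (k + 1) := by
  have hx4 : 4 ≤ x := by
    by_contra hc
    exact h (isFib_of_le_three (by omega))
  have hne : x ∈ {i : ℕ | x < F (i + 1)} := by
    simp only [Set.mem_setOf_eq]
    have h5 : x + 1 ≤ Nat.fib (x + 1) := Nat.le_fib_self (by omega)
    have h6 : Nat.fib (x + 1) ≤ Nat.fib (x + 2) := Nat.fib_mono (by omega)
    show x < Nat.fib (x + 2)
    omega
  set S := {i : ℕ | x < F (i + 1)} with hS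
  have hmem := Nat.sInf_mem (⟨x, hne⟩ : S.Nonempty)
  set j := sInf S with hj
  have hjS : x < F (j + 1) := hmem
  have hj3 : 3 ≤ j := by
    by_contra hc
    push_neg at hc
    have : F (j + 1) ≤ F 3 := F_mono (by omega)
    have : F 3 = 3 := by decide
    omega
  have hnm : j - 1 ∉ S := Nat.notMem_of_lt_sInf (by omega)
  simp only [hS, Set.mem_setOf_eq, not_lt] at hnm
  have hj1 : j - 1 + 1 = j := by omega
  rw [hj1] at hnm
  have : F j ≠ x := fun he => h (he ▸ isFib_F j)
  exact ⟨j, hj3, by omega, hjS⟩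

lemma stab : ∀ x n : ℕ, x ≤ n → iotaBar^[n] x = iotaBar^[x] x := by
  intro x
  induction x using Nat.strong_induction_on with
  | _ x ih =>
    intro n hn
    by_cases hf : IsFib x
    · rw [Function.iterate_fixed (iotaBar_fib hf), Function.iterate_fixed (iotaBar_fib hf)]
    · have hy : iotaBar x < x := iotaBar_lt hf
      obtain ⟨p, hp⟩ : ∃ p, x = p + 1 := ⟨x - 1, by omega⟩
      obtain ⟨m, hm⟩ : ∃ m, n = m + 1 := ⟨n - 1, by omega⟩
      rw [hp, hm, Function.iterate_succ_apply, Function.iterate_succ_apply]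
      rw [← hp]
      rw [ih (iotaBar x) hy m (by omega), ih (iotaBar x) hy p (by omega)]

lemma alphaBar_fib {x : ℕ} (h : IsFib x) : alphaBar x = x :=
  Function.iterate_fixed (iotaBar_fib h) x

lemma main_translation : ∀ k : ℕ, 3 ≤ k → ∀ x : ℕ, x ≤ F (k - 1) + F (k - 3) →
    alphaBar x ≤ alphaBar (x + 2 * F (k - 2)) ∧
    (¬ IsFib x → x ≠ F (k - 1) + F (k - 3) →
      alphaBar x = alphaBar (x + 2 * F (k - 2))) := by
  intro k
  induction k using Nat.strong_induction_on with
  | _ k ih =>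
    intro hk x hx
    obtain ⟨j, rfl⟩ : ∃ j, k = j + 3 := ⟨k - 3, by omega⟩
    have r1 : j + 3 - 1 = j + 2 := by omega
    have r2 : j + 3 - 2 = j + 1 := by omega
    have r3 : j + 3 - 3 = j := by omega
    rw [r1, r3] at hx
    rw [r1, r2, r3]
    have h1 : F (j + 2) = F (j + 1) + F j := F_add_two j
    have h2 : F (j + 3) = F (j + 2) + F (j + 1) := F_add_two (j + 1)
    have h3 : F (j + 4) = F (j + 3) + F (j + 2) := F_add_two (j + 2)
    by_cases hx0 : x = 0
    · subst hx0
      refine ⟨?_, fun hnf _ => absurd ⟨0, rfl⟩ hnf⟩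
      rw [alphaBar_fib (⟨0, rfl⟩ : IsFib 0)]
      exact Nat.zero_le _
    rcases lt_trichotomy x (F j) with hlt | heq | hgt
    · -- x < F j; then j ≥ 2 since x ≥ 1
      have hj2 : 2 ≤ j := by
        by_contra hc
        push_neg at hc
        have hF1 : F j ≤ 1 := by
          have : F j ≤ F 1 := F_mono (by omega)
          have : F 1 = 1 := by decide
          omega
        omega
      obtain ⟨i, rfl⟩ : ∃ i, j = i + 2 := ⟨j - 2, by omega⟩
      have e1 : F (i + 2) = F (i + 1) + F i := F_add_two i
      have e2 : F (i + 3) = F (i + 2) + F (i + 1) := F_add_two (i + 1)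
      have e3 : F (i + 4) = F (i + 3) + F (i + 2) := F_add_two (i + 2)
      have e4 : F (i + 5) = F (i + 4) + F (i + 3) := F_add_two (i + 3)
      have hi2 : F (i + 2) < F (i + 3) := F_lt_F_succ (by omega)
      have hlow : F (i + 4) < x + 2 * F (i + 3) := by omega
      have hhigh : x + 2 * F (i + 3) < F (i + 5) := by omega
      have hio : iotaBar (x + 2 * F (i + 3)) = x + 2 * F (i + 3) - 2 * F (i + 4 - 2) :=
        iotaBar_between (k := i + 4) (by omega) hlow hhigh
      have r4 : i + 4 - 2 = i + 2 := by omega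
      rw [r4] at hio
      have hio2 : iotaBar (x + 2 * F (i + 3)) = x + 2 * F (i + 1) := by omega
      have hIH := ih (i + 3) (by omega) (by omega) x
        (by
          have r5 : i + 3 - 1 = i + 2 := by omega
          have r6 : i + 3 - 3 = i := by omega
          rw [r5, r6]
          have := F_pos i
          omega)
      have r5 : i + 3 - 1 = i + 2 := by omega
      have r6 : i + 3 - 2 = i + 1 := by omega
      have r7 : i + 3 - 3 = i := by omega
      rw [r5, r6, r7] at hIH
      have key : alphaBar (x + 2 * F (i + 3)) = alphaBar (x + 2 * F (i + 1)) := by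
        rw [← alphaBar_iotaBar (x + 2 * F (i + 3)), hio2]
      refine ⟨?_, fun hnf _ => ?_⟩
      · rw [key]; exact hIH.1
      · rw [key]
        exact hIH.2 hnf (by have := F_pos i; omega)
    · -- x = F j
      refine ⟨?_, fun hnf _ => absurd (heq ▸ isFib_F j) hnf⟩
      have hxc : x + 2 * F (j + 1) = F (j + 3) := by omega
      rw [hxc, alphaBar_fib (isFib_F (j + 3))]
      have := alphaBar_le x
      omega
    · -- F j < x
      by_cases hxm : x = F (j + 2) + F j
      · refine ⟨?_, fun _ hne => absurd hxm hne⟩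
        have hxc : x + 2 * F (j + 1) = F (j + 4) := by omega
        rw [hxc, alphaBar_fib (isFib_F (j + 4))]
        have := alphaBar_le x
        have := F_pos (j + 1)
        omega
      · have hxm' : x < F (j + 2) + F j := lt_of_le_of_ne hx hxm
        have hlow : F (j + 3) < x + 2 * F (j + 1) := by omega
        have hhigh : x + 2 * F (j + 1) < F (j + 4) := by omega
        have hio : iotaBar (x + 2 * F (j + 1)) = x + 2 * F (j + 1) - 2 * F (j + 3 - 2) :=
          iotaBar_between (k := j + 3) (by omega) hlow hhigh
        rw [r2] at hio
        have hio2 : iotaBar (x + 2 * F (j + 1)) = x := by omega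
        have key : alphaBar (x + 2 * F (j + 1)) = alphaBar x := by
          rw [← alphaBar_iotaBar (x + 2 * F (j + 1)), hio2]
        exact ⟨key.ge, fun _ _ => key.symm⟩

theorem alphaBar_translation (k : ℕ) (hk : 3 ≤ k) (x : ℕ) (hx : x ≤ F (k - 1) + F (k - 3)) :
    alphaBar x ≤ alphaBar (x + 2 * F (k - 2)) ∧
    (¬ IsFib x → x ≠ F (k - 1) + F (k - 3) →
      alphaBar x = alphaBar (x + 2 * F (k - 2))) :=
  main_translation k hk x hx
end
end

section
/- Let ℓ ≥ 3 be an integer and let x_1 = F_ℓ < x_2 < x_3 < ⋯ be the elements of V̄_ℓ listed in increasing order. Then the sequence of differences (x_{i+1} − x_i)_{i≥1} equals (F_{ℓ−1}, F_{ℓ−1}, F_{ℓ−2}, F_{ℓ−2}, F_{ℓ−1}, F_{ℓ−1}, …), namely the infinite Fibonacci word constructed on the blocks u=(F_{ℓ−1},F_{ℓ−1}) and v=(F_{ℓ−2},F_{ℓ−2}). -/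
noncomputable section

/-- The Fibonacci sequence of words on the alphabet {a = true, b = false}:
`W 1 = a`, `W 2 = ab`, `W (i+2) = W (i+1) ++ W i` (with `W 0 = b`, consistent with the
recurrence). -/
def W : ℕ → List Bool
  | 0 => [false]
  | 1 => [true]
  | (n + 2) => W (n + 1) ++ W n

/-- The n-th letter (0-indexed) of the infinite Fibonacci word
`f_{a,b} = abaababaabaab...` (`true` = a, `false` = b). -/
def fibWord (n : ℕ) : Bool := (W (n + 2)).getD n true


namespace VBarAux

lemma fib2 (n : ℕ) : Nat.fib (n + 2) = Nat.fib (n + 1) + Nat.fib n := by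
  rw [Nat.fib_add_two]; omega

lemma W_length : ∀ n, (W n).length = Nat.fib (n + 1)
  | 0 => rfl
  | 1 => rfl
  | (n + 2) => by
    show ((W (n+1)) ++ W n).length = Nat.fib (n + 2 + 1)
    rw [List.length_append, W_length (n+1), W_length n]
    have h := fib2 (n + 1)
    simp only [show n+1+2 = n+2+1 from rfl, show n+1+1 = n+2 from rfl] at h ⊢
    omega

lemma swapW : ∀ n, ∃ t x y, W n ++ W (n + 1) = t ++ [x, y] ∧ W (n + 1) ++ W n = t ++ [y, x]
  | 0 => ⟨[], false, true, rfl, rfl⟩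
  | (n + 1) => by
    obtain ⟨t, x, y, h1, h2⟩ := swapW n
    refine ⟨W (n+1) ++ t, y, x, ?_, ?_⟩
    · show W (n+1) ++ (W (n+1) ++ W n) = _
      rw [h2]; simp
    · show (W (n+1) ++ W n) ++ W (n+1) = _
      rw [List.append_assoc, h1]; simp

lemma lt_fib_add_two (n : ℕ) : n + 1 ≤ Nat.fib (n + 2) := by
  induction n with
  | zero => simp
  | succ k ih =>
    have h1 : 1 ≤ Nat.fib (k + 1) := Nat.fib_pos.mpr (by omega)
    have h2 := fib2 (k + 1)
    simp only [show k+1+2 = k+1+2 from rfl, show k+1+1 = k+2 from rfl] at h2 ⊢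
    omega

lemma W_getD_succ (k m : ℕ) (hk : 1 ≤ k) (hm : m < Nat.fib (k + 1)) :
    (W (k + 1)).getD m true = (W k).getD m true := by
  obtain ⟨k', rfl⟩ : ∃ k', k = k' + 1 := ⟨k - 1, by omega⟩
  show (W (k' + 1) ++ W k').getD m true = _
  rw [List.getD_append]
  rw [W_length]; exact hm

lemma W_getD_le (k d m : ℕ) (hk : 1 ≤ k) (hm : m < Nat.fib (k + 1)) :
    (W (k + d)).getD m true = (W k).getD m true := by
  induction d with
  | zero => rfl
  | succ d ih =>
    have hm' : m < Nat.fib (k + d + 1) :=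
      lt_of_lt_of_le hm (Nat.fib_mono (by omega))
    rw [show k + (d+1) = (k+d) + 1 from rfl, W_getD_succ (k+d) m (by omega) hm', ih]

lemma W_getD_agree (k1 k2 m : ℕ) (h1 : 1 ≤ k1) (h2 : 1 ≤ k2)
    (hm1 : m < Nat.fib (k1 + 1)) (hm2 : m < Nat.fib (k2 + 1)) :
    (W k1).getD m true = (W k2).getD m true := by
  rcases le_total k1 k2 with h | h
  · rw [← W_getD_le k1 (k2 - k1) m h1 hm1, show k1 + (k2 - k1) = k2 by omega]
  · rw [← W_getD_le k2 (k1 - k2) m h2 hm2, show k2 + (k1 - k2) = k1 by omega]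

lemma fibWord_eq_W (k m : ℕ) (hk : 1 ≤ k) (hm : m < Nat.fib (k + 1)) :
    fibWord m = (W k).getD m true := by
  have hm2 : m < Nat.fib (m + 2 + 1) := by
    have h1 := lt_fib_add_two m
    have h2 : Nat.fib (m+2) ≤ Nat.fib (m+2+1) := Nat.fib_mono (by omega)
    omega
  exact W_getD_agree (m + 2) k m (by omega) hk hm2 hm

lemma NP (k m : ℕ) (hk : 1 ≤ k) (hm : m + 2 < Nat.fib (k + 2)) :
    fibWord (m + Nat.fib (k + 1)) = fibWord m := by
  obtain ⟨k', rfl⟩ : ∃ k', k = k' + 1 := ⟨k - 1, by omega⟩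
  have hm : m + 2 < Nat.fib (k' + 3) := hm
  show fibWord (m + Nat.fib (k' + 2)) = fibWord m
  obtain ⟨t, x, y, h1, h2⟩ := swapW k'
  -- h1 : W k' ++ W (k'+1) = t ++ [x, y],  h2 : W (k'+1) ++ W k' = t ++ [y, x]
  have hW3 : W (k' + 3) = W (k' + 1) ++ (t ++ [x, y]) := by
    show W (k'+2) ++ W (k'+1) = _
    show (W (k'+1) ++ W k') ++ W (k'+1) = _
    rw [List.append_assoc, h1]
  have hW2 : W (k' + 2) = t ++ [y, x] := h2
  have htlen : t.length = Nat.fib (k' + 3) - 2 := by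
    have h3 := congrArg List.length h1
    simp only [List.length_append, W_length, List.length_cons, List.length_nil] at h3
    have h4 := fib2 (k' + 1)
    simp only [show k'+1+2 = k'+3 from rfl, show k'+1+1 = k'+2 from rfl] at h3 h4
    omega
  have hfib3 : 2 ≤ Nat.fib (k' + 3) := by have := lt_fib_add_two (k' + 1); omega
  have hmt : m < t.length := by omega
  have hfib4 : Nat.fib (k' + 4) = Nat.fib (k' + 3) + Nat.fib (k' + 2) := by
    have := fib2 (k' + 2)
    simpa [show k'+2+2 = k'+4 from rfl, show k'+2+1 = k'+3 from rfl] using this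
  have lhs : fibWord (m + Nat.fib (k' + 2)) = (W (k' + 3)).getD (m + Nat.fib (k' + 2)) true := by
    apply fibWord_eq_W (k' + 3) _ (by omega)
    simp only [show k'+3+1 = k'+4 from rfl]
    have hle : Nat.fib (k' + 2) ≤ Nat.fib (k' + 3) := Nat.fib_mono (by omega)
    omega
  rw [lhs, hW3, List.getD_append_right _ _ _ _ (by rw [W_length]; exact Nat.le_add_left _ _),
      W_length, show k'+1+1 = k'+2 from rfl, Nat.add_sub_cancel,
      List.getD_append _ _ _ _ hmt]
  have ht : t.getD m true = (W (k' + 2)).getD m true := by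
    rw [hW2, List.getD_append _ _ _ _ hmt]
  rw [ht, ← fibWord_eq_W (k' + 2) m (by omega)]
  simp only [show k'+2+1 = k'+3 from rfl]
  omega

def cnt (p N : ℕ) : ℕ := ∑ k ∈ Finset.range N, (if fibWord ((p + k) / 2) then 1 else 0)

lemma cnt_succ (p N : ℕ) :
    cnt p (N + 1) = cnt p N + (if fibWord ((p + N) / 2) then 1 else 0) :=
  Finset.sum_range_succ _ _

lemma cnt_split (p M N : ℕ) : cnt p (M + N) = cnt p M + cnt (p + M) N := by
  induction N with
  | zero => simp [cnt]
  | succ n ih =>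
    rw [show M + (n + 1) = (M + n) + 1 from rfl, cnt_succ, ih, cnt_succ,
        show p + (M + n) = p + M + n by omega]
    omega

lemma cnt_congr (p q N : ℕ) (h : ∀ k < N, fibWord ((p + k) / 2) = fibWord ((q + k) / 2)) :
    cnt p N = cnt q N :=
  Finset.sum_congr rfl (fun k hk => by rw [h k (Finset.mem_range.mp hk)])

lemma Bshift (j n : ℕ) (h : n + 5 ≤ 2 * Nat.fib (j + 5)) :
    fibWord ((n + 2 * Nat.fib (j + 4)) / 2) = fibWord (n / 2) := by
  have e : (n + 2 * Nat.fib (j + 4)) / 2 = n / 2 + Nat.fib (j + 4) := by omega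
  rw [e]
  exact NP (j + 3) (n / 2) (by omega) (by show n / 2 + 2 < Nat.fib (j + 5); omega)

lemma blocks : ∀ j, cnt (Nat.fib (j + 3) - 2) (Nat.fib (j + 2)) = Nat.fib (j + 1) ∧
    (2 ≤ j → cnt (Nat.fib (j + 3) - 2) (Nat.fib (j + 1)) = Nat.fib j) := by
  intro j
  induction j using Nat.strong_induction_on with
  | _ j IH =>
    rcases Nat.lt_or_ge j 3 with h3 | h3
    · interval_cases j
      · exact ⟨by decide, fun h => absurd h (by omega)⟩
      · exact ⟨by decide, fun h => absurd h (by omega)⟩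
      · exact ⟨by decide, fun _ => by decide⟩
    · obtain ⟨i, rfl⟩ : ∃ i, j = i + 3 := ⟨j - 3, by omega⟩
      have IH0 := (IH i (by omega)).1
      have IH1 : cnt (Nat.fib (i + 4) - 2) (Nat.fib (i + 3)) = Nat.fib (i + 2) :=
        (IH (i + 1) (by omega)).1
      have IH2 : cnt (Nat.fib (i + 5) - 2) (Nat.fib (i + 3)) = Nat.fib (i + 2) :=
        (IH (i + 2) (by omega)).2 (by omega)
      have f3 : Nat.fib (i + 3) = Nat.fib (i + 2) + Nat.fib (i + 1) := fib2 (i + 1)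
      have f4 : Nat.fib (i + 4) = Nat.fib (i + 3) + Nat.fib (i + 2) := fib2 (i + 2)
      have f5 : Nat.fib (i + 5) = Nat.fib (i + 4) + Nat.fib (i + 3) := fib2 (i + 3)
      have f6 : Nat.fib (i + 6) = Nat.fib (i + 5) + Nat.fib (i + 4) := fib2 (i + 4)
      have p2 : i + 2 ≤ Nat.fib (i + 3) := lt_fib_add_two (i + 1)
      have h34 : 3 ≤ Nat.fib (i + 4) :=
        le_trans (by decide : 3 ≤ Nat.fib 4) (Nat.fib_mono (by omega))
      have hshift : ∀ k < Nat.fib (i + 5),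
          fibWord ((Nat.fib (i + 6) - 2 + k) / 2) = fibWord ((Nat.fib (i + 3) - 2 + k) / 2) := by
        intro k hk
        have e : Nat.fib (i + 6) - 2 + k = (Nat.fib (i + 3) - 2 + k) + 2 * Nat.fib (i + 4) := by
          omega
        rw [e]
        exact Bshift i _ (by omega)
      have hsplit : cnt (Nat.fib (i + 3) - 2) (Nat.fib (i + 5)) =
          cnt (Nat.fib (i + 3) - 2) (Nat.fib (i + 2)) +
          cnt (Nat.fib (i + 4) - 2) (Nat.fib (i + 3)) +
          cnt (Nat.fib (i + 5) - 2) (Nat.fib (i + 3)) := by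
        conv_lhs => rw [show Nat.fib (i + 5) = Nat.fib (i + 2) + (Nat.fib (i + 3) + Nat.fib (i + 3)) by omega]
        rw [cnt_split, cnt_split,
            show Nat.fib (i + 3) - 2 + Nat.fib (i + 2) = Nat.fib (i + 4) - 2 by omega,
            show Nat.fib (i + 4) - 2 + Nat.fib (i + 3) = Nat.fib (i + 5) - 2 by omega]
        omega
      constructor
      · show cnt (Nat.fib (i + 6) - 2) (Nat.fib (i + 5)) = Nat.fib (i + 4)
        rw [cnt_congr _ _ _ hshift, hsplit, IH0, IH1, IH2]
        omega
      · intro _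
        show cnt (Nat.fib (i + 6) - 2) (Nat.fib (i + 4)) = Nat.fib (i + 3)
        have hshift' : ∀ k < Nat.fib (i + 4),
            fibWord ((Nat.fib (i + 6) - 2 + k) / 2) = fibWord ((Nat.fib (i + 3) - 2 + k) / 2) :=
          fun k hk => hshift k (by omega)
        rw [cnt_congr _ _ _ hshift',
            show Nat.fib (i + 4) = Nat.fib (i + 2) + Nat.fib (i + 3) by omega,
            cnt_split,
            show Nat.fib (i + 3) - 2 + Nat.fib (i + 2) = Nat.fib (i + 4) - 2 by omega,
            IH0, IH1]
        omega

def D (L n : ℕ) : ℕ := if fibWord (n / 2) then F (L + 2) else F (L + 1)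

def g (L : ℕ) : ℕ → ℕ
  | 0 => F (L + 3)
  | (n + 1) => g L n + D L n

lemma F2 (n : ℕ) : F (n + 2) = F (n + 1) + F n := fib2 (n + 1)

lemma Fpos (n : ℕ) : 0 < F n := Nat.fib_pos.mpr (by omega)

lemma Fmono {a b : ℕ} (h : a ≤ b) : F a ≤ F b := Nat.fib_mono (by omega)

lemma D_pos (L n : ℕ) : 0 < D L n := by
  unfold D; split <;> exact Fpos _

lemma g_succ (L n : ℕ) : g L (n + 1) = g L n + D L n := rfl

lemma g_mono (L : ℕ) : StrictMono (g L) :=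
  strictMono_nat_of_lt_succ (fun n => by rw [g_succ]; have := D_pos L n; omega)

lemma g_add (L p N : ℕ) : g L (p + N) = g L p + ∑ k ∈ Finset.range N, D L (p + k) := by
  induction N with
  | zero => simp
  | succ n ih =>
    rw [show p + (n + 1) = (p + n) + 1 from rfl, g_succ, ih, Finset.sum_range_succ]
    omega

lemma Dsum (L p N : ℕ) :
    ∑ k ∈ Finset.range N, D L (p + k) = F (L + 1) * N + F L * cnt p N := by
  induction N with
  | zero => simp [cnt]
  | succ n ih =>
    rw [Finset.sum_range_succ, ih, cnt_succ]
    unfold D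
    split
    · rw [F2]; ring
    · ring

lemma K1 (L : ℕ) : ∀ j, g L (Nat.fib (j + 3) - 2) = F (L + 3 + j) := by
  intro j
  induction j with
  | zero =>
    rw [show Nat.fib 3 - 2 = 0 by decide]; rfl
  | succ j ih =>
    have f4 : Nat.fib (j + 4) = Nat.fib (j + 3) + Nat.fib (j + 2) := fib2 (j + 2)
    have p2 : j + 2 ≤ Nat.fib (j + 3) := lt_fib_add_two (j + 1)
    have e : Nat.fib (j + 4) - 2 = (Nat.fib (j + 3) - 2) + Nat.fib (j + 2) := by omega
    show g L (Nat.fib (j + 4) - 2) = F (L + 3 + j + 1)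
    rw [e, g_add, Dsum, ih, (blocks j).1]
    have hadd := Nat.fib_add (L + 1) (j + 1)
    rw [show L + 1 + (j + 1) + 1 = L + j + 3 by omega, show L + 1 + 1 = L + 2 from rfl,
        show j + 1 + 1 = j + 2 from rfl] at hadd
    have f5 : Nat.fib (L + j + 5) = Nat.fib (L + j + 4) + Nat.fib (L + j + 3) := fib2 (L + j + 3)
    simp only [F]
    rw [show L + 3 + j + 1 + 1 = L + j + 5 by omega, show L + 3 + j + 1 = L + j + 4 by omega,
        show L + 1 + 1 = L + 2 from rfl]
    omega

lemma Corr (L j : ℕ) : ∀ k, k ≤ Nat.fib (j + 5) →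
    g L (Nat.fib (j + 6) - 2 + k) = g L (Nat.fib (j + 3) - 2 + k) + 2 * F (L + j + 4) := by
  have f4 : Nat.fib (j + 4) = Nat.fib (j + 3) + Nat.fib (j + 2) := fib2 (j + 2)
  have f5 : Nat.fib (j + 5) = Nat.fib (j + 4) + Nat.fib (j + 3) := fib2 (j + 3)
  have f6 : Nat.fib (j + 6) = Nat.fib (j + 5) + Nat.fib (j + 4) := fib2 (j + 4)
  have p2 : j + 2 ≤ Nat.fib (j + 3) := lt_fib_add_two (j + 1)
  have h34 : 3 ≤ Nat.fib (j + 4) :=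
    le_trans (by decide : 3 ≤ Nat.fib 4) (Nat.fib_mono (by omega))
  intro k
  induction k with
  | zero =>
    intro _
    have a : g L (Nat.fib (j + 6) - 2) = F (L + j + 6) := by
      have h := K1 L (j + 3)
      rw [show L + 3 + (j + 3) = L + j + 6 by omega] at h
      exact h
    have b : g L (Nat.fib (j + 3) - 2) = F (L + j + 3) := by
      have h := K1 L j
      rw [show L + 3 + j = L + j + 3 by omega] at h
      exact h
    have c1 : F (L + j + 6) = F (L + j + 5) + F (L + j + 4) := F2 (L + j + 4)
    have c2 : F (L + j + 5) = F (L + j + 4) + F (L + j + 3) := F2 (L + j + 3)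
    simp only [Nat.add_zero]
    rw [a, b]
    omega
  | succ k ih =>
    intro hk
    have ihh := ih (by omega)
    have hD : D L (Nat.fib (j + 6) - 2 + k) = D L (Nat.fib (j + 3) - 2 + k) := by
      have e : Nat.fib (j + 6) - 2 + k = (Nat.fib (j + 3) - 2 + k) + 2 * Nat.fib (j + 4) := by
        omega
      unfold D
      rw [e, Bshift j _ (by omega)]
    show g L ((Nat.fib (j + 6) - 2 + k) + 1) = g L ((Nat.fib (j + 3) - 2 + k) + 1) + 2 * F (L + j + 4)
    rw [g_succ, g_succ, ihh, hD]
    omega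

lemma g_ge (L n : ℕ) : F (L + 3) ≤ g L n := by
  have : g L 0 ≤ g L n := (g_mono L).monotone (Nat.zero_le n)
  exact this

lemma G1 (L : ℕ) : g L 1 = F (L + 4) := by
  show g L 0 + D L 0 = F (L + 4)
  unfold D
  rw [show (0 : ℕ) / 2 = 0 from rfl, show fibWord 0 = true by decide, if_pos rfl]
  show F (L + 3) + F (L + 2) = F (L + 4)
  rw [F2 (L + 2)]

lemma G2 (L : ℕ) : g L 2 = F (L + 4) + F (L + 2) := by
  show g L 1 + D L 1 = _
  rw [G1]
  unfold D
  rw [show (1 : ℕ) / 2 = 0 from rfl, show fibWord 0 = true by decide, if_pos rfl]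

lemma G3 (L : ℕ) : g L 3 = F (L + 5) := by
  have h := K1 L 2
  rw [show Nat.fib 5 - 2 = 3 by decide] at h
  exact h

lemma G4 (L : ℕ) : g L 4 = F (L + 5) + F (L + 1) := by
  show g L 3 + D L 3 = _
  rw [G3]
  unfold D
  rw [show (3 : ℕ) / 2 = 1 from rfl, show fibWord 1 = false by decide]
  simp

lemma G5 (L : ℕ) : g L 5 = F (L + 5) + F (L + 3) := by
  show g L 4 + D L 4 = _
  rw [G4]
  unfold D
  rw [show (4 : ℕ) / 2 = 2 from rfl, show fibWord 2 = true by decide, if_pos rfl]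
  rw [show F (L + 3) = F (L + 2) + F (L + 1) from F2 (L + 1)]
  omega

lemma G6 (L : ℕ) : g L 6 = F (L + 6) := by
  have h := K1 L 3
  rw [show Nat.fib 6 - 2 = 6 by decide] at h
  exact h

lemma idx_lt {L a b : ℕ} (h : g L a < g L b) : a < b := (g_mono L).lt_iff_lt.mp h

lemma E3 (L j r : ℕ) (h0 : 0 < r) (h1 : F (L + 3 + j) + r < F (L + 3 + j + 1)) :
    ((∃ n, g L n = F (L + 3 + j) + r) ↔
      (∃ n, g L n = F (L + 3 + j) + r - 2 * F (L + 1 + j))) := by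
  rcases Nat.lt_or_ge j 3 with h3 | h3
  · interval_cases j
    · -- j = 0
      have hF2 : F (L + 2) = F (L + 1) + F L := F2 L
      have hF3 : F (L + 3) = F (L + 2) + F (L + 1) := F2 (L + 1)
      have hF4 : F (L + 4) = F (L + 3) + F (L + 2) := F2 (L + 2)
      have h1' : F (L + 3) + r < F (L + 4) := h1
      show (∃ n, g L n = F (L + 3) + r) ↔ (∃ n, g L n = F (L + 3) + r - 2 * F (L + 1))
      have hr : r < F (L + 2) := by omega
      constructor
      · rintro ⟨n, hn⟩
        exfalso
        have hn1 : 1 ≤ n := idx_lt (show g L 0 < g L n by rw [hn]; show F (L+3) < _; omega)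
        have : g L 1 ≤ g L n := (g_mono L).monotone hn1
        rw [G1, hn] at this
        omega
      · rintro ⟨n, hn⟩
        exfalso
        have h := g_ge L n
        rw [hn] at h
        have hL : F L ≤ F (L + 1) := Fmono (by omega)
        omega
    · -- j = 1
      have hF2 : F (L + 2) = F (L + 1) + F L := F2 L
      have hF3 : F (L + 3) = F (L + 2) + F (L + 1) := F2 (L + 1)
      have hF4 : F (L + 4) = F (L + 3) + F (L + 2) := F2 (L + 2)
      have hF5 : F (L + 5) = F (L + 4) + F (L + 3) := F2 (L + 3)
      show (∃ n, g L n = F (L + 4) + r) ↔ (∃ n, g L n = F (L + 4) + r - 2 * F (L + 2))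
      have h1' : F (L + 4) + r < F (L + 5) := h1
      constructor
      · rintro ⟨n, hn⟩
        have hn1 : 1 ≤ n := idx_lt (show g L 0 < g L n by rw [hn]; show F (L+3) < _; omega)
        have hn3 : n < 3 := idx_lt (show g L n < g L 3 by rw [hn, G3]; omega)
        have hn2 : n ≠ 1 := by
          intro h; rw [h, G1] at hn; omega
        have : n = 2 := by omega
        rw [this, G2] at hn
        refine ⟨0, ?_⟩
        show F (L + 3) = _
        omega
      · rintro ⟨n, hn⟩
        have hup : g L n < g L 1 := by
          rw [hn, G1]
          have h := Fmono (show L + 1 ≤ L + 2 by omega)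
          omega
        have : n = 0 := by have := idx_lt hup; omega
        rw [this] at hn
        have hn' : F (L + 3) = F (L + 4) + r - 2 * F (L + 2) := hn
        refine ⟨2, ?_⟩
        rw [G2]
        omega
    · -- j = 2
      have hF2 : F (L + 2) = F (L + 1) + F L := F2 L
      have hF3 : F (L + 3) = F (L + 2) + F (L + 1) := F2 (L + 1)
      have hF4 : F (L + 4) = F (L + 3) + F (L + 2) := F2 (L + 2)
      have hF5 : F (L + 5) = F (L + 4) + F (L + 3) := F2 (L + 3)
      have hF6 : F (L + 6) = F (L + 5) + F (L + 4) := F2 (L + 4)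
      show (∃ n, g L n = F (L + 5) + r) ↔ (∃ n, g L n = F (L + 5) + r - 2 * F (L + 3))
      have h1' : F (L + 5) + r < F (L + 6) := h1
      constructor
      · rintro ⟨n, hn⟩
        have hn1 : 3 < n := idx_lt (show g L 3 < g L n by rw [hn, G3]; omega)
        have hn3 : n < 6 := idx_lt (show g L n < g L 6 by rw [hn, G6]; omega)
        rcases (by omega : n = 4 ∨ n = 5) with h | h
        · rw [h, G4] at hn
          refine ⟨0, ?_⟩
          show F (L + 3) = _
          omega
        · rw [h, G5] at hn
          refine ⟨1, ?_⟩
          rw [G1]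
          omega
      · rintro ⟨n, hn⟩
        have hup : g L n < g L 2 := by
          rw [hn, G2]
          omega
        have hn2 : n < 2 := idx_lt hup
        rcases (by omega : n = 0 ∨ n = 1) with h | h
        · rw [h] at hn
          have hn' : F (L + 3) = F (L + 5) + r - 2 * F (L + 3) := hn
          refine ⟨4, ?_⟩
          rw [G4]
          omega
        · rw [h, G1] at hn
          refine ⟨5, ?_⟩
          rw [G5]
          omega
  · -- general case j = i + 3
    obtain ⟨i, rfl⟩ : ∃ i, j = i + 3 := ⟨j - 3, by omega⟩
    have f5 : Nat.fib (i + 5) = Nat.fib (i + 4) + Nat.fib (i + 3) := fib2 (i + 3)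
    have f6 : Nat.fib (i + 6) = Nat.fib (i + 5) + Nat.fib (i + 4) := fib2 (i + 4)
    have f7 : Nat.fib (i + 7) = Nat.fib (i + 6) + Nat.fib (i + 5) := fib2 (i + 5)
    have p2 : i + 2 ≤ Nat.fib (i + 3) := lt_fib_add_two (i + 1)
    have c4 : F (L + i + 4) = F (L + i + 3) + F (L + i + 2) := F2 (L + i + 2)
    have c5 : F (L + i + 5) = F (L + i + 4) + F (L + i + 3) := F2 (L + i + 3)
    have c6 : F (L + i + 6) = F (L + i + 5) + F (L + i + 4) := F2 (L + i + 4)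
    have c7 : F (L + i + 7) = F (L + i + 6) + F (L + i + 5) := F2 (L + i + 5)
    have K3 : g L (Nat.fib (i + 6) - 2) = F (L + i + 6) := by
      have h := K1 L (i + 3); rw [show L + 3 + (i + 3) = L + i + 6 by omega] at h; exact h
    have K4 : g L (Nat.fib (i + 7) - 2) = F (L + i + 7) := by
      have h := K1 L (i + 4); rw [show L + 3 + (i + 4) = L + i + 7 by omega] at h; exact h
    have K0 : g L (Nat.fib (i + 3) - 2) = F (L + i + 3) := by
      have h := K1 L i; rw [show L + 3 + i = L + i + 3 by omega] at h; exact h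
    have ep : Nat.fib (i + 7) - 2 = (Nat.fib (i + 6) - 2) + Nat.fib (i + 5) := by omega
    have hCorr := Corr L i
    rw [show L + 3 + (i + 3) = L + i + 6 by omega] at h1 ⊢
    rw [show L + i + 6 + 1 = L + i + 7 from rfl] at h1
    rw [show L + 1 + (i + 3) = L + i + 4 by omega]
    have hr2 : r < F (L + i + 5) := by omega
    have hx' : F (L + i + 6) + r - 2 * F (L + i + 4) = F (L + i + 3) + r := by omega
    rw [hx']
    -- top of the lower window:
    have htop : g L ((Nat.fib (i + 3) - 2) + Nat.fib (i + 5)) = F (L + i + 3) + F (L + i + 5) := by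
      have h := hCorr (Nat.fib (i + 5)) (le_refl _)
      rw [← ep, K4] at h
      omega
    constructor
    · rintro ⟨n, hn⟩
      have hlow : Nat.fib (i + 6) - 2 < n :=
        idx_lt (show g L (Nat.fib (i+6) - 2) < g L n by rw [hn, K3]; omega)
      have hhigh : n < Nat.fib (i + 7) - 2 :=
        idx_lt (show g L n < g L (Nat.fib (i+7) - 2) by rw [hn, K4]; omega)
      obtain ⟨k, rfl⟩ : ∃ k, n = (Nat.fib (i + 6) - 2) + k := ⟨n - (Nat.fib (i+6) - 2), by omega⟩
      have hk : k ≤ Nat.fib (i + 5) := by omega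
      have h := hCorr k hk
      refine ⟨(Nat.fib (i + 3) - 2) + k, ?_⟩
      omega
    · rintro ⟨n, hn⟩
      have hlow : Nat.fib (i + 3) - 2 < n :=
        idx_lt (show g L (Nat.fib (i+3) - 2) < g L n by rw [hn, K0]; omega)
      have hhigh : n < (Nat.fib (i + 3) - 2) + Nat.fib (i + 5) :=
        idx_lt (show g L n < g L ((Nat.fib (i+3) - 2) + Nat.fib (i+5)) by rw [hn, htop]; omega)
      obtain ⟨k, rfl⟩ : ∃ k, n = (Nat.fib (i + 3) - 2) + k := ⟨n - (Nat.fib (i+3) - 2), by omega⟩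
      have hk : k ≤ Nat.fib (i + 5) := by omega
      have h := hCorr k hk
      refine ⟨(Nat.fib (i + 6) - 2) + k, ?_⟩
      omega

lemma iotaBar_fib {x : ℕ} (h : IsFib x) : iotaBar x = x := by
  unfold iotaBar; rw [if_pos h]

lemma iotaBar_lt {x : ℕ} (h : ¬ IsFib x) : iotaBar x < x := by
  unfold iotaBar
  rw [if_neg h]
  have hx : 1 ≤ x := by
    rcases Nat.eq_zero_or_pos x with h0 | h0
    · exact absurd ⟨0, h0.symm⟩ h
    · exact h0
  have hF := Fpos (sInf {i : ℕ | x < F (i + 1)} - 2)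
  omega

lemma sInf_eq_of {x i : ℕ} (h1 : F i ≤ x) (h2 : x < F (i + 1)) :
    sInf {i' : ℕ | x < F (i' + 1)} = i := by
  have hmem : i ∈ {i' : ℕ | x < F (i' + 1)} := h2
  refine le_antisymm (Nat.sInf_le hmem) ?_
  by_contra hlt
  push_neg at hlt
  have hin := Nat.sInf_mem (⟨i, hmem⟩ : {i' : ℕ | x < F (i' + 1)}.Nonempty)
  simp only [Set.mem_setOf_eq] at hin
  have hm : F (sInf {i' : ℕ | x < F (i' + 1)} + 1) ≤ F i := Fmono (by omega)
  omega

lemma not_isFib_between {x i : ℕ} (h1 : F i < x) (h2 : x < F (i + 1)) : ¬ IsFib x := by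
  rintro ⟨j, rfl⟩
  have h1' : Nat.fib (i + 1) < Nat.fib j := h1
  have h2' : Nat.fib j < Nat.fib (i + 2) := h2
  have ha : i + 1 < j := by
    by_contra hle
    push_neg at hle
    have := Nat.fib_mono hle
    omega
  have hb : Nat.fib (i + 2) ≤ Nat.fib j := Nat.fib_mono (by omega)
  omega

lemma iotaBar_eq {x i : ℕ} (h1 : F i < x) (h2 : x < F (i + 1)) :
    iotaBar x = x - 2 * F (i - 2) := by
  unfold iotaBar
  rw [if_neg (not_isFib_between h1 h2), sInf_eq_of (le_of_lt h1) h2]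

lemma iter_stab : ∀ y : ℕ, ∀ k, y ≤ k → iotaBar^[k] y = alphaBar y := by
  intro y
  induction y using Nat.strong_induction_on with
  | _ y IH =>
    intro k hk
    by_cases hf : IsFib y
    · unfold alphaBar
      rw [Function.iterate_fixed (iotaBar_fib hf), Function.iterate_fixed (iotaBar_fib hf)]
    · have hlt := iotaBar_lt hf
      have hy1 : 1 ≤ y := by omega
      obtain ⟨k', rfl⟩ : ∃ k', k = k' + 1 := ⟨k - 1, by omega⟩
      rw [Function.iterate_succ_apply]
      rw [IH (iotaBar y) hlt k' (by omega)]
      have halt : alphaBar y = iotaBar^[y - 1] (iotaBar y) := by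
        show iotaBar^[y] y = _
        obtain ⟨y', hy⟩ : ∃ y', y = y' + 1 := ⟨y - 1, by omega⟩
        conv_lhs => rw [hy]
        rw [Function.iterate_succ_apply, ← hy, show y - 1 = y' by omega]
      rw [halt, IH (iotaBar y) hlt (y - 1) (by omega)]

lemma alpha_fib {x : ℕ} (h : IsFib x) : alphaBar x = x := by
  unfold alphaBar
  rw [Function.iterate_fixed (iotaBar_fib h)]

lemma alpha_step {x : ℕ} (h : ¬ IsFib x) : alphaBar x = alphaBar (iotaBar x) := by
  have hlt := iotaBar_lt h
  have hy1 : 1 ≤ x := by omega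
  show iotaBar^[x] x = _
  obtain ⟨x', hx⟩ : ∃ x', x = x' + 1 := ⟨x - 1, by omega⟩
  conv_lhs => rw [hx]
  rw [Function.iterate_succ_apply, ← hx, iter_stab (iotaBar x) x' (by omega)]

lemma alpha_le : ∀ x : ℕ, alphaBar x ≤ x := by
  intro x
  induction x using Nat.strong_induction_on with
  | _ x IH =>
    by_cases hf : IsFib x
    · rw [alpha_fib hf]
    · have hlt := iotaBar_lt hf
      rw [alpha_step hf]
      have := IH (iotaBar x) hlt
      omega

lemma main_equiv (L : ℕ) : ∀ x : ℕ, (F (L + 3) ≤ alphaBar x ↔ ∃ n, g L n = x) := by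
  intro x
  induction x using Nat.strong_induction_on with
  | _ x IH =>
    have h3F : 3 ≤ F (L + 3) := le_trans (by decide : 3 ≤ F 3) (Fmono (by omega))
    rcases Nat.lt_or_ge x (F (L + 3)) with hlt | hge
    · constructor
      · intro h
        have := alpha_le x
        omega
      · rintro ⟨n, rfl⟩
        have := g_ge L n
        omega
    · by_cases hf : IsFib x
      · obtain ⟨jj, hj⟩ := hf
        have hx3 : 3 ≤ x := by omega
        have hjj : 4 ≤ jj := by
          by_contra hle
          push_neg at hle
          have h1 : Nat.fib jj ≤ Nat.fib 3 := Nat.fib_mono (by omega)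
          have h2 : Nat.fib 3 = 2 := by decide
          omega
        have hxF : F (jj - 1) = x := by
          show Nat.fib (jj - 1 + 1) = x
          rw [show jj - 1 + 1 = jj by omega]
          exact hj
        have hiL : L + 3 ≤ jj - 1 := by
          by_contra hle
          push_neg at hle
          have h1 : F (jj - 1) ≤ F (L + 2) := Fmono (by omega)
          have h2 : F (L + 2) < F (L + 3) := Nat.fib_lt_fib_succ (n := L + 3) (by omega)
          omega
        constructor
        · intro _
          refine ⟨Nat.fib (((jj - 1) - (L + 3)) + 3) - 2, ?_⟩
          have h := K1 L ((jj - 1) - (L + 3))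
          rw [show L + 3 + ((jj - 1) - (L + 3)) = jj - 1 by omega] at h
          rw [h, hxF]
        · intro _
          rw [alpha_fib ⟨jj, hj⟩]
          exact hge
      · -- x not Fibonacci
        have hx3 : 3 ≤ x := by omega
        have hne : {i' : ℕ | x < F (i' + 1)}.Nonempty := by
          refine ⟨x + 1, ?_⟩
          show x < F (x + 2)
          have h : x + 2 ≤ Nat.fib (x + 2 + 1) := lt_fib_add_two (x + 1)
          show x < Nat.fib (x + 2 + 1)
          omega
        set i := sInf {i' : ℕ | x < F (i' + 1)} with hidef
        have hmem : x < F (i + 1) := Nat.sInf_mem hne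
        have hipos : 1 ≤ i := by
          by_contra h0
          push_neg at h0
          have : i = 0 := by omega
          rw [this] at hmem
          have : F (0 + 1) = 1 := by decide
          omega
        have hFi : F i ≤ x := by
          by_contra h'
          push_neg at h'
          have hmem' : (i - 1) ∈ {i' : ℕ | x < F (i' + 1)} := by
            simp only [Set.mem_setOf_eq]
            rw [show i - 1 + 1 = i by omega]
            exact h'
          have := Nat.sInf_le hmem'
          omega
        have hiL : L + 3 ≤ i := by
          by_contra hle
          push_neg at hle
          have : F (i + 1) ≤ F (L + 3) := Fmono (by omega)
          omega
        have hFilt : F i < x := lt_of_le_of_ne hFi (fun h => hf ⟨i + 1, h⟩)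
        have hstep : alphaBar x = alphaBar (x - 2 * F (i - 2)) := by
          rw [alpha_step hf, iotaBar_eq hFilt hmem]
        have hIH := IH (x - 2 * F (i - 2)) (by have := Fpos (i - 2); omega)
        have hj' : i = L + 3 + (i - (L + 3)) := by omega
        set j := i - (L + 3) with hjdef
        set r := x - F i with hrdef
        have hrx : x = F (L + 3 + j) + r := by rw [← hj']; omega
        have hE := E3 L j r (by omega) (by rw [← hj', show i + 1 = i + 1 from rfl]; exact (by omega : F i + r < F (i + 1)))
        rw [← hrx] at hE
        rw [show L + 1 + j = i - 2 by omega] at hE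
        rw [hstep, hIH]
        exact hE.symm

end VBarAux

theorem VBar_differences (ℓ : ℕ) (hℓ : 3 ≤ ℓ) (x : ℕ → ℕ) (hmono : StrictMono x)
    (hrange : Set.range x = VBar ℓ) :
    x 0 = F ℓ ∧
    ∀ i : ℕ, x (i + 1) - x i = if fibWord (i / 2) then F (ℓ - 1) else F (ℓ - 2) := by
  obtain ⟨L, rfl⟩ : ∃ L, ℓ = L + 3 := ⟨ℓ - 3, by omega⟩
  have hset : VBar (L + 3) = Set.range (VBarAux.g L) := by
    ext y
    simp only [VBar, Set.mem_setOf_eq, Set.mem_range]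
    exact VBarAux.main_equiv L y
  have hxg : x = VBarAux.g L :=
    (hmono.range_inj (VBarAux.g_mono L)).mp (hrange.trans hset)
  constructor
  · rw [hxg]; rfl
  · intro i
    rw [hxg, VBarAux.g_succ, Nat.add_sub_cancel_left]
    rfl
end
end
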